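/- arXiv:1712.07464 — 5 statements merged into one kernel-verified Lean document; each statement's English description precedes it below -/
import Mathlib

section
/- In Pigou's example with total demand T = 1, the price of anarchy 1 / (1 - (β+1)^{-1/β} + (β+1)^{-1}) tends to infinity as β → ∞. -/
open Filter Topology

/- The denominator is squeezed to `0⁺`: for `β > 0` the power `(β + 1) ^ (-1 / β)` lies below `1`,
and it tends to `1` because the exponent `-1 / β` decays faster than `log (β + 1)` grows. -/

theorem tendsto_add_const_rpow_div_atTop (a c : ℝ) :
    Tendsto (fun x : ℝ => (x + c) ^ (a / x)) atTop (𝓝 1) := by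
  refine ((tendsto_rpow_div_mul_add a 1 (-c) zero_ne_one).comp
    (tendsto_atTop_add_const_right atTop c tendsto_id)).congr fun x => ?_
  simp

theorem tendsto_one_sub_add_one_rpow_add_inv :
    Tendsto (fun β : ℝ => 1 - (β + 1) ^ (-1 / β) + (β + 1)⁻¹) atTop (𝓝 0) := by
  have hinv : Tendsto (fun β : ℝ => (β + 1)⁻¹) atTop (𝓝 0) :=
    (tendsto_atTop_add_const_right atTop 1 tendsto_id).inv_tendsto_atTop
  simpa using ((tendsto_const_nhds (x := (1 : ℝ))).sub (tendsto_add_const_rpow_div_atTop (-1) 1)).add hinv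

theorem one_sub_add_one_rpow_add_inv_pos {β : ℝ} (hβ : 0 < β) :
    0 < 1 - (β + 1) ^ (-1 / β) + (β + 1)⁻¹ := by
  have hpow : (β + 1) ^ (-1 / β) < 1 :=
    Real.rpow_lt_one_of_one_lt_of_neg (by linarith) (div_neg_of_neg_of_pos (by norm_num) hβ)
  have hinv : 0 < (β + 1)⁻¹ := by positivity
  linarith

theorem stmt_2 :
    Tendsto (fun β : ℝ => 1 / (1 - (β + 1) ^ (-1 / β) + (β + 1)⁻¹)) atTop atTop := by
  have hdenom : Tendsto (fun β : ℝ => 1 - (β + 1) ^ (-1 / β) + (β + 1)⁻¹) atTop (𝓝[>] 0) :=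
    tendsto_nhdsWithin_iff.mpr ⟨tendsto_one_sub_add_one_rpow_add_inv,
      (eventually_gt_atTop 0).mono fun _ hβ => one_sub_add_one_rpow_add_inv_pos hβ⟩
  simpa only [one_div, Pi.inv_def] using hdenom.inv_tendsto_nhdsGT_zero
end

section
/- A nonatomic congestion game in which every consumption price function has the form τ_a(x) = α_a x^β, for constants α_a ≥ 0 and a common exponent β ≥ 0, is well designed: for every user volume vector, every Nash equilibrium profile has the same social cost as every social optimum profile. -/
open Finset Filter

variable {A S K : Type*}

/-- Load of resource `a` under profile `f`. -/
noncomputable def ncgLoad [Fintype S] (r : A → S → ℝ) (f : S → ℝ) (a : A) : ℝ :=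
  ∑ s, r a s * f s

/-- Social cost of a profile. -/
noncomputable def ncgCost [Fintype A] [Fintype S] (r : A → S → ℝ) (τ : A → ℝ → ℝ)
    (f : S → ℝ) : ℝ :=
  ∑ a, ncgLoad r f a * τ a (ncgLoad r f a)

/-- Price of strategy `s` under profile `f`. -/
noncomputable def ncgPrice [Fintype A] [Fintype S] (r : A → S → ℝ) (τ : A → ℝ → ℝ)
    (f : S → ℝ) (s : S) : ℝ :=
  ∑ a, r a s * τ a (ncgLoad r f a)

/-- Feasibility of a strategy profile for demand vector `d`. -/
def NCGFeasible [Fintype S] [DecidableEq K] (grp : S → K) (d : K → ℝ) (f : S → ℝ) : Prop :=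
  (∀ s, 0 ≤ f s) ∧ ∀ k, ∑ s ∈ univ.filter (fun s => grp s = k), f s = d k

/-- Wardrop/Nash equilibrium. -/
def NCGIsNE [Fintype A] [Fintype S] [DecidableEq K] (r : A → S → ℝ) (τ : A → ℝ → ℝ)
    (grp : S → K) (d : K → ℝ) (f : S → ℝ) : Prop :=
  NCGFeasible grp d f ∧
    ∀ s s' : S, grp s = grp s' → 0 < f s → ncgPrice r τ f s ≤ ncgPrice r τ f s'

/-- Social optimum. -/
def NCGIsSO [Fintype A] [Fintype S] [DecidableEq K] (r : A → S → ℝ) (τ : A → ℝ → ℝ)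
    (grp : S → K) (d : K → ℝ) (f : S → ℝ) : Prop :=
  NCGFeasible grp d f ∧
    ∀ g : S → ℝ, NCGFeasible grp d g → ncgCost r τ f ≤ ncgCost r τ g

/-- Beckmann potential. -/
noncomputable def ncgPotential [Fintype A] [Fintype S] (r : A → S → ℝ) (τ : A → ℝ → ℝ)
    (f : S → ℝ) : ℝ :=
  ∑ a, ∫ t in (0:ℝ)..(ncgLoad r f a), τ a t


lemma ncg_key {β : ℝ} (hβ : 0 ≤ β) {x y : ℝ} (hx : 0 ≤ x) (hy : 0 ≤ y) :
    y ^ (β + 1) + (β + 1) * (y ^ β * (x - y)) ≤ x ^ (β + 1) := by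
  rcases eq_or_lt_of_le hy with rfl | hy'
  · rcases eq_or_lt_of_le hβ with rfl | hβ'
    · simp [Real.rpow_natCast]
    · rw [Real.zero_rpow (by linarith : β + 1 ≠ 0), Real.zero_rpow hβ'.ne']
      simpa using Real.rpow_nonneg hx (β + 1)
  · have hs : (-1 : ℝ) ≤ x / y - 1 := by
      have : 0 ≤ x / y := div_nonneg hx hy'.le
      linarith
    have h := one_add_mul_self_le_rpow_one_add hs (p := β + 1) (by linarith)
    have hyp : y ^ (β + 1) = y ^ β * y := Real.rpow_add_one hy'.ne' β
    have hpow : (1 + (x / y - 1)) ^ (β + 1) = x ^ (β + 1) / y ^ (β + 1) := by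
      rw [show 1 + (x / y - 1) = x / y by ring, Real.div_rpow hx hy'.le]
    have hyq : (0:ℝ) < y ^ (β + 1) := Real.rpow_pos_of_pos hy' _
    rw [hpow] at h
    have h2 : (1 + (β + 1) * (x / y - 1)) * y ^ (β + 1) ≤ x ^ (β + 1) :=
      (le_div_iff₀ hyq).mp h
    calc y ^ (β + 1) + (β + 1) * (y ^ β * (x - y))
        = (1 + (β + 1) * (x / y - 1)) * y ^ (β + 1) := by
          rw [hyp]; field_simp
      _ ≤ x ^ (β + 1) := h2

theorem stmt_3 [Fintype A] [Fintype S] [Fintype K] [DecidableEq K]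
    (r : A → S → ℝ) (hr : ∀ a s, 0 ≤ r a s) (grp : S → K)
    (α : A → ℝ) (hα : ∀ a, 0 ≤ α a) (β : ℝ) (hβ : 0 ≤ β)
    (τ : A → ℝ → ℝ) (hτ : ∀ a x, τ a x = α a * x ^ β)
    (d : K → ℝ) (hd : ∀ k, 0 ≤ d k)
    (f g : S → ℝ) (hf : NCGIsNE r τ grp d f) (hg : NCGIsSO r τ grp d g) :
    ncgCost r τ f = ncgCost r τ g := by
  obtain ⟨⟨hf0, hfd⟩, hfne⟩ := hf
  obtain ⟨⟨hg0, hgd⟩, hgso⟩ := hg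
  -- loads are nonneg
  have hLf : ∀ a, 0 ≤ ncgLoad r f a := fun a =>
    Finset.sum_nonneg fun s _ => mul_nonneg (hr a s) (hf0 s)
  have hLg : ∀ a, 0 ≤ ncgLoad r g a := fun a =>
    Finset.sum_nonneg fun s _ => mul_nonneg (hr a s) (hg0 s)
  have pow1 : ∀ y : ℝ, 0 ≤ y → y * y ^ β = y ^ (β + 1) := by
    intro y hy
    rcases eq_or_lt_of_le hy with rfl | hy'
    · rw [Real.zero_rpow (by linarith : β + 1 ≠ 0)]; ring
    · rw [Real.rpow_add_one hy'.ne' β]; ring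
  -- cost as rpow sum
  have cost_eq : ∀ h : S → ℝ, (∀ s, 0 ≤ h s) →
      ncgCost r τ h = ∑ a, α a * (ncgLoad r h a) ^ (β + 1) := by
    intro h h0
    unfold ncgCost
    refine Finset.sum_congr rfl fun a _ => ?_
    have hL : 0 ≤ ncgLoad r h a :=
      Finset.sum_nonneg fun s _ => mul_nonneg (hr a s) (h0 s)
    rw [hτ, ← pow1 _ hL]; ring
  -- cross-term identity
  have cross : ∀ h : S → ℝ,
      ∑ s, h s * ncgPrice r τ f s = ∑ a, α a * (ncgLoad r f a) ^ β * ncgLoad r h a := by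
    intro h
    unfold ncgPrice ncgLoad
    calc ∑ s, h s * ∑ a, r a s * τ a (∑ s', r a s' * f s')
        = ∑ s, ∑ a, h s * (r a s * τ a (∑ s', r a s' * f s')) := by
          simp [Finset.mul_sum]
      _ = ∑ a, ∑ s, h s * (r a s * τ a (∑ s', r a s' * f s')) := Finset.sum_comm
      _ = ∑ a, α a * (∑ s', r a s' * f s') ^ β * ∑ s, r a s * h s := by
          refine Finset.sum_congr rfl fun a _ => ?_
          rw [Finset.mul_sum]
          refine Finset.sum_congr rfl fun s _ => ?_
          rw [hτ]; ring
  -- prices nonneg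
  have hP : ∀ s, 0 ≤ ncgPrice r τ f s := by
    intro s
    refine Finset.sum_nonneg fun a _ => mul_nonneg (hr a s) ?_
    rw [hτ]
    exact mul_nonneg (hα a) (Real.rpow_nonneg (hLf a) β)
  set P := ncgPrice r τ f with hPdef
  -- variational inequality
  have varin : ∑ s, f s * P s ≤ ∑ s, g s * P s := by
    rw [← Finset.sum_fiberwise (g := grp) (f := fun s => f s * P s),
        ← Finset.sum_fiberwise (g := grp) (f := fun s => g s * P s)]
    refine Finset.sum_le_sum fun k _ => ?_
    set Fk := ∑ s ∈ univ.filter (fun s => grp s = k), f s * P s with hFk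
    have step_a : ∀ s' ∈ univ.filter (fun s => grp s = k), Fk ≤ d k * P s' := by
      intro s' hs'
      simp only [Finset.mem_filter] at hs'
      have : Fk ≤ ∑ s ∈ univ.filter (fun s => grp s = k), f s * P s' := by
        refine Finset.sum_le_sum fun s hs => ?_
        simp only [Finset.mem_filter] at hs
        rcases eq_or_lt_of_le (hf0 s) with h0 | h0
        · rw [← h0]; ring_nf; exact le_refl _
        · exact mul_le_mul_of_nonneg_left (hfne s s' (hs.2.trans hs'.2.symm) h0) (hf0 s)
      rwa [← Finset.sum_mul, hfd k] at this
    rcases eq_or_lt_of_le (hd k) with hdk | hdk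
    · -- d k = 0 : all f s in group vanish
      have hz : ∀ s ∈ univ.filter (fun s => grp s = k), f s = 0 := by
        intro s hs
        have := (Finset.sum_eq_zero_iff_of_nonneg (fun s _ => hf0 s)).mp
          ((hfd k).trans hdk.symm) s hs
        exact this
      have : Fk = 0 := Finset.sum_eq_zero fun s hs => by rw [hz s hs]; ring
      rw [this]
      exact Finset.sum_nonneg fun s _ => mul_nonneg (hg0 s) (hP s)
    · -- d k > 0
      have key : d k * Fk ≤ d k * ∑ s ∈ univ.filter (fun s => grp s = k), g s * P s := by
        calc d k * Fk = ∑ s' ∈ univ.filter (fun s => grp s = k), g s' * Fk := by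
              rw [← Finset.sum_mul, hgd k]
          _ ≤ ∑ s' ∈ univ.filter (fun s => grp s = k), g s' * (d k * P s') := by
              refine Finset.sum_le_sum fun s' hs' => ?_
              exact mul_le_mul_of_nonneg_left (step_a s' hs') (hg0 s')
          _ = d k * ∑ s ∈ univ.filter (fun s => grp s = k), g s * P s := by
              rw [Finset.mul_sum]; refine Finset.sum_congr rfl fun s _ => ?_; ring
      exact le_of_mul_le_mul_left key hdk
  -- the gradient inequality summed
  have grad : ncgCost r τ f + (β + 1) * (∑ s, g s * P s - ∑ s, f s * P s) ≤ ncgCost r τ g := by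
    rw [cost_eq f hf0, cost_eq g hg0, cross f, cross g]
    have hsum : ∑ a, α a * ((ncgLoad r f a) ^ (β + 1) +
        (β + 1) * ((ncgLoad r f a) ^ β * (ncgLoad r g a - ncgLoad r f a)))
        ≤ ∑ a, α a * (ncgLoad r g a) ^ (β + 1) := by
      refine Finset.sum_le_sum fun a _ => ?_
      exact mul_le_mul_of_nonneg_left (ncg_key hβ (hLg a) (hLf a)) (hα a)
    calc (∑ a, α a * (ncgLoad r f a) ^ (β + 1)) + (β + 1) *
          (∑ a, α a * (ncgLoad r f a) ^ β * ncgLoad r g a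
            - ∑ a, α a * (ncgLoad r f a) ^ β * ncgLoad r f a)
        = ∑ a, α a * ((ncgLoad r f a) ^ (β + 1) +
            (β + 1) * ((ncgLoad r f a) ^ β * (ncgLoad r g a - ncgLoad r f a))) := by
          rw [← Finset.sum_sub_distrib, Finset.mul_sum, ← Finset.sum_add_distrib]
          exact Finset.sum_congr rfl fun a _ => by ring
      _ ≤ ∑ a, α a * (ncgLoad r g a) ^ (β + 1) := hsum
  have hle : ncgCost r τ f ≤ ncgCost r τ g := by
    have : 0 ≤ (β + 1) * (∑ s, g s * P s - ∑ s, f s * P s) := by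
      apply mul_nonneg (by linarith)
      linarith
    linarith
  have hge : ncgCost r τ g ≤ ncgCost r τ f := hgso f ⟨hf0, hfd⟩
  linarith
end

section
/- For a nonatomic congestion game with BPR latencies τ_a(x) = γ_a x^β + η_a (γ_a, η_a > 0, β ≥ 0), the price of anarchy is 1 + O(T^{−β}) as the total demand T = Σ_k d_k → ∞; concretely, there is a constant c ≥ 0 (independent of the demand vector) such that 1 ≤ C(f̃)/C(f*) ≤ 1 + c·T^{−β} for all demand vectors with T sufficiently large, where f̃ is a Nash equilibrium and f* a social optimum. -/
open Finset Filter

variable {A S K : Type*}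

/-- Nash equilibrium as a minimizer of the Beckmann potential. -/
def NCGIsPotNE [Fintype A] [Fintype S] [DecidableEq K] (r : A → S → ℝ) (τ : A → ℝ → ℝ)
    (grp : S → K) (d : K → ℝ) (f : S → ℝ) : Prop :=
  NCGFeasible grp d f ∧
    ∀ g : S → ℝ, NCGFeasible grp d g → ncgPotential r τ f ≤ ncgPotential r τ g

private lemma bpr_integral (β γ η L : ℝ) (hβ : 0 ≤ β) :
    (∫ t in (0:ℝ)..L, (γ * t ^ β + η)) = γ * L ^ (β + 1) / (β + 1) + η * L := by
  have h1 : (-1:ℝ) < β := by linarith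
  rw [intervalIntegral.integral_add ((intervalIntegral.intervalIntegrable_rpow' h1).const_mul γ)
      intervalIntegrable_const,
    intervalIntegral.integral_const_mul, integral_rpow (Or.inl h1),
    intervalIntegral.integral_const, Real.zero_rpow (by linarith : β + 1 ≠ 0), smul_eq_mul]
  ring

private lemma mul_self_rpow {L β : ℝ} (hL : 0 ≤ L) (hβ : 0 ≤ β) :
    L * L ^ β = L ^ (β + 1) := by
  rcases eq_or_lt_of_le hL with h | h
  · rw [← h, Real.zero_rpow (by linarith : β + 1 ≠ 0), mul_comm, mul_zero]
  · rw [Real.rpow_add_one (ne_of_gt h), mul_comm]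

private lemma cost_formula [Fintype A] [Fintype S] (r : A → S → ℝ) (γ η : A → ℝ)
    (β : ℝ) (hβ : 0 ≤ β)
    (τ : A → ℝ → ℝ) (hτ : ∀ a x, τ a x = γ a * x ^ β + η a)
    (f : S → ℝ) (hf : ∀ a, 0 ≤ ncgLoad r f a) :
    ncgCost r τ f = ∑ a, (γ a * (ncgLoad r f a) ^ (β + 1) + η a * ncgLoad r f a) := by
  unfold ncgCost
  refine Finset.sum_congr rfl fun a _ => ?_
  have h := mul_self_rpow (hf a) hβ
  rw [hτ]; linear_combination (γ a) * h

private lemma pot_formula [Fintype A] [Fintype S] (r : A → S → ℝ) (γ η : A → ℝ)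
    (β : ℝ) (hβ : 0 ≤ β)
    (τ : A → ℝ → ℝ) (hτ : ∀ a x, τ a x = γ a * x ^ β + η a)
    (f : S → ℝ) :
    ncgPotential r τ f =
      ∑ a, (γ a * (ncgLoad r f a) ^ (β + 1) / (β + 1) + η a * ncgLoad r f a) := by
  unfold ncgPotential
  refine Finset.sum_congr rfl fun a _ => ?_
  have : (∫ t in (0:ℝ)..(ncgLoad r f a), τ a t)
      = ∫ t in (0:ℝ)..(ncgLoad r f a), (γ a * t ^ β + η a) := by
    apply intervalIntegral.integral_congr
    intro t _; exact hτ a t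
  rw [this, bpr_integral β (γ a) (η a) _ hβ]

theorem stmt_9 [Fintype A] [Fintype S] [Nonempty S] [Fintype K] [DecidableEq K]
    (r : A → S → ℝ) (hr : ∀ a s, 0 ≤ r a s) (hrs : ∀ s, 0 < ∑ a, r a s)
    (grp : S → K)
    (γ η : A → ℝ) (hγ : ∀ a, 0 < γ a) (hη : ∀ a, 0 < η a) (β : ℝ) (hβ : 0 ≤ β)
    (τ : A → ℝ → ℝ) (hτ : ∀ a x, τ a x = γ a * x ^ β + η a) :
    ∃ c : ℝ, 0 ≤ c ∧ ∃ T₀ : ℝ, ∀ d : K → ℝ, (∀ k, 0 ≤ d k) → T₀ ≤ ∑ k, d k →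
      ∀ fe fo : S → ℝ, NCGIsPotNE r τ grp d fe → NCGIsSO r τ grp d fo →
        1 ≤ ncgCost r τ fe / ncgCost r τ fo ∧
          ncgCost r τ fe / ncgCost r τ fo ≤ 1 + c * (∑ k, d k) ^ (-β) := by
  have s0 : S := Classical.arbitrary S
  have hAne : (univ : Finset A).Nonempty := by
    by_contra h
    rw [Finset.not_nonempty_iff_eq_empty] at h
    have h2 := hrs s0
    rw [h, Finset.sum_empty] at h2
    exact lt_irrefl 0 h2
  obtain ⟨a0, -⟩ := hAne
  have hAne : (univ : Finset A).Nonempty := ⟨a0, mem_univ a0⟩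
  have hSne : (univ : Finset S).Nonempty := univ_nonempty
  set nA : ℝ := (Fintype.card A : ℝ) with hnAdef
  have hnA : 0 < nA := by
    have : 0 < Fintype.card A := Fintype.card_pos_iff.mpr ⟨a0⟩
    rw [hnAdef]; exact_mod_cast this
  set R : S → ℝ := fun s => ∑ a, r a s with hRdef
  set Rmin := univ.inf' hSne R with hRmindef
  set Rmax := univ.sup' hSne R with hRmaxdef
  have hRminpos : 0 < Rmin := (Finset.lt_inf'_iff _).mpr fun s _ => hrs s
  have hRmaxpos : 0 < Rmax := lt_of_lt_of_le (hrs s0) (Finset.le_sup' R (mem_univ s0))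
  set γmin := univ.inf' hAne γ with hγmindef
  have hγminpos : 0 < γmin := (Finset.lt_inf'_iff _).mpr fun a _ => hγ a
  set ηmax := univ.sup' hAne η with hηmaxdef
  have hηmax : 0 ≤ ηmax := le_trans (hη a0).le (Finset.le_sup' η (mem_univ a0))
  set c : ℝ := β * ηmax * Rmax * nA ^ (β + 1) / (γmin * Rmin ^ (β + 1)) with hcdef
  have hc : 0 ≤ c := by
    apply div_nonneg
    · exact mul_nonneg (mul_nonneg (mul_nonneg hβ hηmax) hRmaxpos.le)
        (Real.rpow_nonneg hnA.le _)
    · exact (mul_pos hγminpos (Real.rpow_pos_of_pos hRminpos _)).le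
  refine ⟨c, hc, 1, ?_⟩
  intro d hd hT fe fo hNE hSO
  set T := ∑ k, d k with hTdef
  have hT0 : (0:ℝ) < T := lt_of_lt_of_le one_pos hT
  obtain ⟨hfeF, hfeMin⟩ := hNE
  obtain ⟨hfoF, hfoMin⟩ := hSO
  have loadnn : ∀ f : S → ℝ, (∀ s, 0 ≤ f s) → ∀ a, 0 ≤ ncgLoad r f a := fun f hf a =>
    Finset.sum_nonneg fun s _ => mul_nonneg (hr a s) (hf s)
  have sumf : ∀ f : S → ℝ, NCGFeasible grp d f → ∑ s, f s = T := by
    intro f hf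
    calc ∑ s, f s = ∑ k, ∑ s ∈ univ.filter (fun s => grp s = k), f s :=
          (Finset.sum_fiberwise univ grp f).symm
      _ = ∑ k, d k := Finset.sum_congr rfl fun k _ => hf.2 k
  have sumload : ∀ f : S → ℝ, ∑ a, ncgLoad r f a = ∑ s, R s * f s := by
    intro f
    simp only [ncgLoad, hRdef]
    rw [Finset.sum_comm]
    exact Finset.sum_congr rfl fun s _ => (Finset.sum_mul _ _ _).symm
  have hb1 : (β:ℝ) + 1 ≠ 0 := by linarith
  have hrel : ∀ f : S → ℝ, (∀ a, 0 ≤ ncgLoad r f a) →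
      ncgCost r τ f + β * (∑ a, η a * ncgLoad r f a) = (β + 1) * ncgPotential r τ f := by
    intro f hf
    rw [cost_formula r γ η β hβ τ hτ f hf, pot_formula r γ η β hβ τ hτ f,
      Finset.mul_sum, Finset.mul_sum, ← Finset.sum_add_distrib]
    refine Finset.sum_congr rfl fun a _ => ?_
    field_simp
    ring
  have hHfe : 0 ≤ ∑ a, η a * ncgLoad r fe a :=
    Finset.sum_nonneg fun a _ => mul_nonneg (hη a).le (loadnn fe hfeF.1 a)
  have hHfo : ∑ a, η a * ncgLoad r fo a ≤ ηmax * (Rmax * T) := by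
    calc ∑ a, η a * ncgLoad r fo a ≤ ∑ a, ηmax * ncgLoad r fo a :=
          Finset.sum_le_sum fun a _ =>
            mul_le_mul_of_nonneg_right (Finset.le_sup' η (mem_univ a)) (loadnn fo hfoF.1 a)
      _ = ηmax * ∑ a, ncgLoad r fo a := (Finset.mul_sum _ _ _).symm
      _ = ηmax * ∑ s, R s * fo s := by rw [sumload fo]
      _ ≤ ηmax * ∑ s, Rmax * fo s := by
          refine mul_le_mul_of_nonneg_left ?_ hηmax
          exact Finset.sum_le_sum fun s _ =>
            mul_le_mul_of_nonneg_right (Finset.le_sup' R (mem_univ s)) (hfoF.1 s)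
      _ = ηmax * (Rmax * T) := by rw [← Finset.mul_sum, sumf fo hfoF]
  have key : ncgCost r τ fe ≤ ncgCost r τ fo + β * ηmax * Rmax * T := by
    have hΦ := hfeMin fo hfoF
    have h1 := hrel fe (loadnn fe hfeF.1)
    have h2 := hrel fo (loadnn fo hfoF.1)
    have h3 : (β + 1) * ncgPotential r τ fe ≤ (β + 1) * ncgPotential r τ fo :=
      mul_le_mul_of_nonneg_left hΦ (by linarith)
    have h4 : β * (∑ a, η a * ncgLoad r fo a) ≤ β * (ηmax * (Rmax * T)) :=
      mul_le_mul_of_nonneg_left hHfo hβ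
    have h5 : 0 ≤ β * (∑ a, η a * ncgLoad r fe a) := mul_nonneg hβ hHfe
    have h6 : β * (ηmax * (Rmax * T)) = β * ηmax * Rmax * T := by ring
    linarith
  -- lower bound on the optimal cost
  obtain ⟨astar, -, hastar⟩ := Finset.exists_mem_eq_sup' hAne (fun a => ncgLoad r fo a)
  set Lmax := univ.sup' hAne (fun a => ncgLoad r fo a) with hLmaxdef
  have hLmax_ge : Rmin * T / nA ≤ Lmax := by
    have h1 : Rmin * T ≤ ∑ a, ncgLoad r fo a := by
      rw [sumload fo]
      calc Rmin * T = ∑ s, Rmin * fo s := by rw [← Finset.mul_sum, sumf fo hfoF]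
        _ ≤ ∑ s, R s * fo s := Finset.sum_le_sum fun s _ =>
            mul_le_mul_of_nonneg_right (Finset.inf'_le R (mem_univ s)) (hfoF.1 s)
    have h2 : ∑ a, ncgLoad r fo a ≤ nA * Lmax := by
      calc ∑ a, ncgLoad r fo a ≤ ∑ _a : A, Lmax :=
            Finset.sum_le_sum fun a _ => Finset.le_sup' (fun a => ncgLoad r fo a) (mem_univ a)
        _ = nA * Lmax := by
            rw [Finset.sum_const, Finset.card_univ, nsmul_eq_mul, hnAdef]
    rw [div_le_iff₀ hnA]
    nlinarith
  have hbase : 0 ≤ Rmin * T / nA := by positivity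
  have hD : γmin * (Rmin * T / nA) ^ (β + 1) ≤ ncgCost r τ fo := by
    rw [cost_formula r γ η β hβ τ hτ fo (loadnn fo hfoF.1)]
    have h3 : (Rmin * T / nA) ^ (β + 1) ≤ (ncgLoad r fo astar) ^ (β + 1) :=
      Real.rpow_le_rpow hbase (le_trans hLmax_ge (le_of_eq hastar)) (by linarith)
    have h4 : γmin ≤ γ astar := Finset.inf'_le γ (mem_univ astar)
    have h5 : 0 ≤ η astar * ncgLoad r fo astar :=
      mul_nonneg (hη astar).le (loadnn fo hfoF.1 astar)
    have h6 : (0:ℝ) ≤ (Rmin * T / nA) ^ (β + 1) := Real.rpow_nonneg hbase _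
    have hterm : γmin * (Rmin * T / nA) ^ (β + 1)
        ≤ γ astar * (ncgLoad r fo astar) ^ (β + 1) + η astar * ncgLoad r fo astar := by
      nlinarith
    refine le_trans hterm (Finset.single_le_sum
      (f := fun a => γ a * (ncgLoad r fo a) ^ (β + 1) + η a * ncgLoad r fo a)
      (fun a _ => ?_) (mem_univ astar))
    exact add_nonneg (mul_nonneg (hγ a).le (Real.rpow_nonneg (loadnn fo hfoF.1 a) _))
      (mul_nonneg (hη a).le (loadnn fo hfoF.1 a))
  have hCfo_pos : 0 < ncgCost r τ fo :=
    lt_of_lt_of_le (mul_pos hγminpos (Real.rpow_pos_of_pos (by positivity) _)) hD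
  constructor
  · rw [le_div_iff₀ hCfo_pos, one_mul]
    exact hfoMin fe hfeF
  · rw [div_le_iff₀ hCfo_pos]
    have hTb : (0:ℝ) < T ^ β := Real.rpow_pos_of_pos hT0 β
    have hck : c * T ^ (-β) * (γmin * (Rmin * T / nA) ^ (β + 1)) = β * ηmax * Rmax * T := by
      rw [Real.div_rpow (by positivity) hnA.le, Real.mul_rpow hRminpos.le hT0.le,
        Real.rpow_neg hT0.le, Real.rpow_add_one hT0.ne' β, hcdef]
      have hRb : (0:ℝ) < Rmin ^ (β + 1) := Real.rpow_pos_of_pos hRminpos _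
      have hnAb : (0:ℝ) < nA ^ (β + 1) := Real.rpow_pos_of_pos hnA _
      field_simp
    have h5 : c * T ^ (-β) * (γmin * (Rmin * T / nA) ^ (β + 1))
        ≤ c * T ^ (-β) * ncgCost r τ fo :=
      mul_le_mul_of_nonneg_left hD (mul_nonneg hc (Real.rpow_nonneg hT0.le _))
    have h6 : (1 + c * T ^ (-β)) * ncgCost r τ fo
        = ncgCost r τ fo + c * T ^ (-β) * ncgCost r τ fo := by ring
    linarith
end

section
/- For a nonatomic congestion game with BPR latencies τ_a(x) = γ_a x^β + η_a (γ_a, η_a > 0, β > 0), every social optimum profile f* is an O(d_min^{−β})-approximate Nash equilibrium: there is a constant c such that for every group k and strategies s, s' ∈ S_k with f*_s > 0, τ_s(f*) ≤ (1 + c·d_min^{−β})·τ_{s'}(f*), where d_min = min_k d_k. -/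
open Finset Filter

variable {A S K : Type*}

-- tangent line inequality for rpow
lemma rpow_tangent {u v β : ℝ} (hu : 0 ≤ u) (hv : 0 ≤ v) (hβ : 0 < β) :
    v ^ (1+β) + (1+β) * v ^ β * (u - v) ≤ u ^ (1+β) := by
  rcases eq_or_lt_of_le hv with rfl | hv
  · rw [Real.zero_rpow (by positivity), Real.zero_rpow hβ.ne']
    simpa using Real.rpow_nonneg hu _
  · have hp : (1:ℝ) ≤ 1 + β := by linarith
    have hsv : (-1:ℝ) ≤ u / v - 1 := by
      have := div_nonneg hu hv.le; linarith
    have h := one_add_mul_self_le_rpow_one_add hsv hp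
    have h1 : 1 + (u/v - 1) = u / v := by ring
    rw [h1, Real.div_rpow hu hv.le] at h
    have hvp : 0 < v ^ (1+β) := Real.rpow_pos_of_pos hv _
    have h3 := mul_le_mul_of_nonneg_right h hvp.le
    rw [div_mul_cancel₀ _ hvp.ne'] at h3
    have hvv : v ^ (1+β) = v ^ β * v := by
      rw [add_comm, Real.rpow_add hv, Real.rpow_one]
    have key : v ^ (1+β) + (1+β) * v ^ β * (u - v)
        = (1 + (1+β)*(u/v-1)) * v ^ (1+β) := by
      rw [hvv]; field_simp
    rw [key]; exact h3

lemma ncg_kkt {A S K : Type*} [Fintype A] [Fintype S] [DecidableEq K]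
    (r : A → S → ℝ) (hr : ∀ a s, 0 ≤ r a s) (grp : S → K)
    (γ η : A → ℝ) (hγ : ∀ a, 0 < γ a) (hη : ∀ a, 0 < η a) (β : ℝ) (hβ : 0 < β)
    (τ : A → ℝ → ℝ) (hτ : ∀ a x, τ a x = γ a * x ^ β + η a)
    (d : K → ℝ) (f : S → ℝ) (hf : NCGIsSO r τ grp d f)
    (s s' : S) (hgrp : grp s = grp s') (hfs : 0 < f s) :
    ∑ a, r a s * ((1+β) * γ a * (ncgLoad r f a) ^ β + η a)
      ≤ ∑ a, r a s' * ((1+β) * γ a * (ncgLoad r f a) ^ β + η a) := by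
  classical
  by_cases hss : s = s'
  · subst hss; exact le_refl _
  obtain ⟨⟨hfpos, hfsum⟩, hopt⟩ := hf
  set x : A → ℝ := ncgLoad r f with hxdef
  have hx : ∀ a, 0 ≤ x a := fun a => Finset.sum_nonneg fun u _ => mul_nonneg (hr a u) (hfpos u)
  set Δ : A → ℝ := fun a => r a s' - r a s with hΔdef
  set g : ℝ → S → ℝ := fun t u => f u + (if u = s' then t else 0) - (if u = s then t else 0)
    with hgdef
  -- nonnegativity of perturbed profile
  have hgpos : ∀ t, 0 < t → t ≤ f s → ∀ u, 0 ≤ g t u := by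
    intro t ht1 ht2 u
    by_cases h1 : u = s'
    · subst h1
      simp only [hgdef, if_pos rfl, if_neg (Ne.symm hss), if_true]
      have := hfpos u; linarith
    · by_cases h2 : u = s
      · subst h2; simp only [hgdef, if_neg h1, if_pos rfl, if_true]; linarith
      · simp only [hgdef, if_neg h1, if_neg h2]; have := hfpos u; linarith
  -- feasibility
  have hgfeas : ∀ t, 0 < t → t ≤ f s → NCGFeasible grp d (g t) := by
    intro t ht1 ht2
    refine ⟨hgpos t ht1 ht2, fun k => ?_⟩
    have : ∑ u ∈ univ.filter (fun u => grp u = k), g t u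
        = (∑ u ∈ univ.filter (fun u => grp u = k), f u)
          + ((if s' ∈ univ.filter (fun u => grp u = k) then t else 0)
            - (if s ∈ univ.filter (fun u => grp u = k) then t else 0)) := by
      rw [Finset.sum_sub_distrib, Finset.sum_add_distrib,
        Finset.sum_ite_eq' _ s' (fun _ => t), Finset.sum_ite_eq' _ s (fun _ => t)]
      ring
    rw [this, hfsum k]
    have hmem : (s' ∈ univ.filter (fun u => grp u = k)) ↔ (s ∈ univ.filter (fun u => grp u = k)) := by
      simp [hgrp]
    by_cases hsk : s ∈ univ.filter (fun u => grp u = k)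
    · rw [if_pos hsk, if_pos (hmem.mpr hsk)]; ring
    · rw [if_neg hsk, if_neg (fun h => hsk (hmem.mp h))]; ring
  -- load of perturbed profile
  have hgload : ∀ t a, ncgLoad r (g t) a = x a + t * Δ a := by
    intro t a
    have hterm : ∀ u, r a u * g t u
        = r a u * f u + ((if u = s' then r a u * t else 0) - (if u = s then r a u * t else 0)) := by
      intro u
      by_cases h1 : u = s'
      · subst h1; simp only [hgdef, if_pos rfl, if_neg (Ne.symm hss), if_true]; ring
      · by_cases h2 : u = s
        · subst h2; simp only [hgdef, if_neg h1, if_pos rfl, if_true]; ring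
        · simp only [hgdef, if_neg h1, if_neg h2]; ring
    unfold ncgLoad
    rw [Finset.sum_congr rfl (fun u _ => hterm u), Finset.sum_add_distrib,
      Finset.sum_sub_distrib, Finset.sum_ite_eq' _ s' (fun u => r a u * t),
      Finset.sum_ite_eq' _ s (fun u => r a u * t)]
    simp only [Finset.mem_univ, if_true]
    show (∑ u, r a u * f u) + (r a s' * t - r a s * t) = x a + t * Δ a
    rw [hxdef]; unfold ncgLoad; rw [hΔdef]; ring
  -- cost formula
  have hcostf : ∀ (h : S → ℝ), (∀ u, 0 ≤ h u) →
      ncgCost r τ h = ∑ a, (γ a * (ncgLoad r h a) ^ (1+β) + η a * ncgLoad r h a) := by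
    intro h hh
    unfold ncgCost
    refine Finset.sum_congr rfl fun a _ => ?_
    have hl : 0 ≤ ncgLoad r h a := Finset.sum_nonneg fun u _ => mul_nonneg (hr a u) (hh u)
    rw [hτ, Real.rpow_add' hl (by positivity : (1:ℝ)+β ≠ 0), Real.rpow_one]
    ring
  -- key inequality for each t
  set φ : ℝ → ℝ := fun t => ∑ a, Δ a * ((1+β) * γ a * (x a + t * Δ a) ^ β + η a) with hφdef
  have hφnn : ∀ t, 0 < t → t ≤ f s → 0 ≤ φ t := by
    intro t ht1 ht2
    have hle := hopt (g t) (hgfeas t ht1 ht2)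
    rw [hcostf f hfpos, hcostf (g t) (hgpos t ht1 ht2)] at hle
    have hxt : ∀ a, 0 ≤ x a + t * Δ a := by
      intro a
      rw [← hgload t a]
      show (0:ℝ) ≤ ∑ u, r a u * g t u
      exact Finset.sum_nonneg fun u _ => mul_nonneg (hr a u) (hgpos t ht1 ht2 u)
    have hterm : ∀ a ∈ (univ : Finset A),
        γ a * (x a + t * Δ a) ^ (1+β) + η a * (x a + t * Δ a)
          ≤ (γ a * (x a) ^ (1+β) + η a * x a)
            + t * (Δ a * ((1+β) * γ a * (x a + t * Δ a) ^ β + η a)) := by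
      intro a _
      have ht3 := rpow_tangent (hx a) (hxt a) hβ
      -- (x+tΔ)^(1+β) + (1+β)(x+tΔ)^β * (x - (x+tΔ)) ≤ x^(1+β)
      have h4 := mul_le_mul_of_nonneg_left ht3 (hγ a).le
      nlinarith [h4]
    have hsum := Finset.sum_le_sum hterm
    simp only [hgload] at hle
    rw [← hxdef] at hle
    have hsplit : ∑ a, (γ a * x a ^ (1+β) + η a * x a
          + t * (Δ a * ((1+β) * γ a * (x a + t * Δ a) ^ β + η a)))
        = (∑ a, (γ a * (x a) ^ (1+β) + η a * x a)) + t * φ t := by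
      rw [hφdef, Finset.mul_sum, ← Finset.sum_add_distrib]
    rw [hsplit] at hsum
    have h5 : (0:ℝ) ≤ t * φ t := by linarith [le_trans hle hsum]
    nlinarith [h5]
  -- limit as t → 0⁺
  have hconta : ∀ a : A, ContinuousAt
      (fun t : ℝ => Δ a * ((1+β) * γ a * (x a + t * Δ a) ^ β + η a)) 0 := by
    intro a
    apply ContinuousAt.mul continuousAt_const
    apply ContinuousAt.add _ continuousAt_const
    apply ContinuousAt.mul continuousAt_const
    have h1 : ContinuousAt (fun t : ℝ => x a + t * Δ a) 0 :=
      (continuous_const.add (continuous_id.mul continuous_const)).continuousAt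
    exact ContinuousAt.comp (Real.continuousAt_rpow_const _ _ (Or.inr hβ.le)) h1
  have hcont : ContinuousAt φ 0 := by
    rw [hφdef]
    exact tendsto_finset_sum _ (fun a _ => hconta a)
  have htend : Filter.Tendsto φ (nhdsWithin 0 (Set.Ioi 0)) (nhds (φ 0)) :=
    hcont.continuousWithinAt
  have hev : ∀ᶠ t in nhdsWithin (0:ℝ) (Set.Ioi 0), 0 ≤ φ t := by
    filter_upwards [Ioc_mem_nhdsGT_of_mem ⟨le_refl (0:ℝ), hfs⟩] with t ht
    exact hφnn t ht.1 ht.2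
  have h0 : 0 ≤ φ 0 := ge_of_tendsto htend hev
  rw [hφdef] at h0
  simp only [zero_mul, add_zero] at h0
  have : ∑ a, Δ a * ((1+β) * γ a * (x a) ^ β + η a)
      = (∑ a, r a s' * ((1+β) * γ a * (x a) ^ β + η a))
        - ∑ a, r a s * ((1+β) * γ a * (x a) ^ β + η a) := by
    rw [← Finset.sum_sub_distrib]
    exact Finset.sum_congr rfl fun a _ => by rw [hΔdef]; ring
  rw [this] at h0
  rw [hxdef] at *
  linarith

lemma ncg_algebra {β Hmax Hmin m Nβ Dβ c Gs Hs Gs' Hs' Gs0 Hs0 : ℝ}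
    (hβ : 0 < β) (hHmin : 0 < Hmin) (hm : 0 < m) (hNβ : 0 < Nβ) (hDβ : 0 < Dβ)
    (hHmaxmin : Hmin ≤ Hmax) (hcpos : 0 ≤ c)
    (hc_eq : c * (Hmin * m) = 2*β*Hmax*Hmax*Nβ)
    (kkt1 : (1+β) * Gs + Hs ≤ (1+β) * Gs' + Hs')
    (kkt0 : (1+β) * Gs0 + Hs0 ≤ (1+β) * Gs' + Hs')
    (hGs0 : m * Dβ ≤ Gs0 * Nβ)
    (hGs'nn : 0 ≤ Gs')
    (hHs : Hs ≤ Hmax) (hHs' : Hmin ≤ Hs') (hHs'2 : Hs' ≤ Hmax) (hHs0 : Hmin ≤ Hs0) :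
    Gs + Hs ≤ (1 + c * Dβ⁻¹) * (Gs' + Hs') := by
  have hHmax : 0 < Hmax := lt_of_lt_of_le hHmin hHmaxmin
  have hP : Hmin ≤ Gs' + Hs' := by linarith
  have key : β * Hmax * Dβ ≤ c * (Gs' + Hs') := by
    by_cases hcase : m * Dβ ≤ 2 * Hmax * Nβ
    · have step1 : β*Hmax*Dβ*(Hmin*m) ≤ 2*β*Hmax*Hmax*Nβ*Hmin := by
        have t1 : β*Hmax*Hmin*(m*Dβ) ≤ β*Hmax*Hmin*(2*Hmax*Nβ) :=
          mul_le_mul_of_nonneg_left hcase (by positivity)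
        nlinarith [t1]
      have step2 : 2*β*Hmax*Hmax*Nβ*Hmin ≤ c*(Gs'+Hs')*(Hmin*m) := by
        have hmul2 : c*(Hmin*m)*(Gs'+Hs') = 2*β*Hmax*Hmax*Nβ*(Gs'+Hs') := by rw [hc_eq]
        have h2 : 2*β*Hmax*Hmax*Nβ*Hmin ≤ 2*β*Hmax*Hmax*Nβ*(Gs'+Hs') :=
          mul_le_mul_of_nonneg_left hP (by positivity)
        nlinarith [hmul2, h2]
      exact le_of_mul_le_mul_right (le_trans step1 step2) (mul_pos hHmin hm)
    · push_neg at hcase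
      have h3 : Gs0 - Hmax ≤ Gs' := by nlinarith
      have h4 : m*Dβ - Hmax*Nβ ≤ Gs'*Nβ := by
        have := mul_le_mul_of_nonneg_right h3 hNβ.le
        nlinarith
      have h5 : m*Dβ ≤ 2*((Gs'+Hs')*Nβ) := by nlinarith [mul_nonneg hHmin.le hNβ.le]
      have step1 : β*Hmax*Dβ*(Nβ*(Hmin*m)) ≤ (2*β*Hmax*Hmax*Nβ)*((Gs'+Hs')*Nβ) := by
        have h6 : β*Hmax*Hmin*(m*Dβ)*Nβ ≤ β*Hmax*Hmin*(2*((Gs'+Hs')*Nβ))*Nβ := by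
          apply mul_le_mul_of_nonneg_right _ hNβ.le
          apply mul_le_mul_of_nonneg_left h5 (by positivity)
        have h7 : β*Hmax*Hmin*(2*((Gs'+Hs')*Nβ))*Nβ ≤ (2*β*Hmax*Hmax*Nβ)*((Gs'+Hs')*Nβ) := by
          have h8 : 0 ≤ (Gs'+Hs')*Nβ := mul_nonneg (by linarith) hNβ.le
          nlinarith [mul_nonneg (mul_nonneg hβ.le hNβ.le) (mul_nonneg (sub_nonneg.mpr hHmaxmin) h8)]
        linarith
      have step2 : β*Hmax*Dβ*(Nβ*(Hmin*m)) ≤ (c*(Gs'+Hs'))*(Nβ*(Hmin*m)) := by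
        calc β*Hmax*Dβ*(Nβ*(Hmin*m)) ≤ (2*β*Hmax*Hmax*Nβ)*((Gs'+Hs')*Nβ) := step1
          _ = (c*(Gs'+Hs'))*(Nβ*(Hmin*m)) := by rw [← hc_eq]; ring
      exact le_of_mul_le_mul_right step2 (by positivity)
  have hkey2 : β * Hmax ≤ c * Dβ⁻¹ * (Gs' + Hs') := by
    have h8 := mul_le_mul_of_nonneg_right key (inv_nonneg.mpr hDβ.le)
    rw [mul_assoc, mul_inv_cancel₀ (ne_of_gt hDβ), mul_one] at h8
    calc β * Hmax ≤ c * (Gs' + Hs') * Dβ⁻¹ := h8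
      _ = c * Dβ⁻¹ * (Gs' + Hs') := by ring
  have h9 : Gs + Hs ≤ Gs' + Hs' + β*Hmax := by
    nlinarith [kkt1, hβ, mul_le_mul_of_nonneg_left hHs hβ.le,
      mul_le_mul_of_nonneg_left hHs' hβ.le, mul_pos hβ hHmax, mul_pos hβ hHmin,
      mul_pos hβ (mul_pos hβ hHmax)]
  have expand : (1 + c*Dβ⁻¹)*(Gs'+Hs') = (Gs'+Hs') + c*Dβ⁻¹*(Gs'+Hs') := by ring
  rw [expand]; linarith

theorem stmt_10 [Fintype A] [Fintype S] [Fintype K] [Nonempty K] [DecidableEq K]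
    (r : A → S → ℝ) (hr : ∀ a s, 0 ≤ r a s) (hrs : ∀ s, 0 < ∑ a, r a s)
    (grp : S → K)
    (γ η : A → ℝ) (hγ : ∀ a, 0 < γ a) (hη : ∀ a, 0 < η a) (β : ℝ) (hβ : 0 < β)
    (τ : A → ℝ → ℝ) (hτ : ∀ a x, τ a x = γ a * x ^ β + η a) :
    ∃ c : ℝ, ∀ d : K → ℝ, (∀ k, 0 < d k) →
      ∀ f : S → ℝ, NCGIsSO r τ grp d f →
        ∀ s s' : S, grp s = grp s' → 0 < f s →
          ncgPrice r τ f s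
            ≤ (1 + c * (Finset.univ.inf' Finset.univ_nonempty d) ^ (-β))
                * ncgPrice r τ f s' := by
  classical
  rcases isEmpty_or_nonempty S with hS | hS
  · exact ⟨0, fun d hd f hf s => (IsEmpty.elim hS s)⟩
  have hrpos : ∀ u : S, ∃ a : A, 0 < r a u := by
    intro u
    obtain ⟨a, -, ha⟩ := Finset.exists_lt_of_sum_lt
      (show (∑ a : A, (0:ℝ)) < ∑ a, r a u by simpa using hrs u)
    exact ⟨a, ha⟩
  -- scalar constants
  obtain ⟨Hmax, hHmaxdef⟩ : ∃ v : ℝ, v = univ.sup' univ_nonempty (fun u : S => ∑ a, r a u * η a) :=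
    ⟨_, rfl⟩
  obtain ⟨Hmin, hHmindef⟩ : ∃ v : ℝ, v = univ.inf' univ_nonempty (fun u : S => ∑ a, r a u * η a) :=
    ⟨_, rfl⟩
  obtain ⟨m, hmdef⟩ : ∃ v : ℝ, v = univ.inf' univ_nonempty (fun u : S => ∑ a, γ a * (r a u) ^ (1+β)) :=
    ⟨_, rfl⟩
  obtain ⟨Nβ, hNβdef⟩ : ∃ v : ℝ, v = ((Fintype.card S : ℝ)) ^ β := ⟨_, rfl⟩
  have hN : (0:ℝ) < (Fintype.card S : ℝ) := by exact_mod_cast Fintype.card_pos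
  have hNβ : 0 < Nβ := by rw [hNβdef]; exact Real.rpow_pos_of_pos hN β
  have hHb : ∀ u : S, Hmin ≤ ∑ a, r a u * η a ∧ (∑ a, r a u * η a) ≤ Hmax := by
    intro u
    constructor
    · rw [hHmindef]; exact Finset.inf'_le _ (Finset.mem_univ u)
    · rw [hHmaxdef]; exact Finset.le_sup' (fun u : S => ∑ a, r a u * η a) (Finset.mem_univ u)
  have hHmin : 0 < Hmin := by
    rw [hHmindef]
    refine (Finset.lt_inf'_iff _).mpr fun u _ => ?_
    obtain ⟨a, ha⟩ := hrpos u
    exact Finset.sum_pos' (fun b _ => mul_nonneg (hr b u) (hη b).le)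
      ⟨a, Finset.mem_univ a, mul_pos ha (hη a)⟩
  have hmm : ∀ u : S, m ≤ ∑ a, γ a * (r a u) ^ (1+β) := by
    intro u; rw [hmdef]; exact Finset.inf'_le _ (Finset.mem_univ u)
  have hm : 0 < m := by
    rw [hmdef]
    refine (Finset.lt_inf'_iff _).mpr fun u _ => ?_
    obtain ⟨a, ha⟩ := hrpos u
    exact Finset.sum_pos' (fun b _ => mul_nonneg (hγ b).le (Real.rpow_nonneg (hr b u) _))
      ⟨a, Finset.mem_univ a, mul_pos (hγ a) (Real.rpow_pos_of_pos ha _)⟩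
  have hHmaxmin : Hmin ≤ Hmax :=
    le_trans (hHb (Classical.arbitrary S)).1 (hHb (Classical.arbitrary S)).2
  have hHmax : 0 < Hmax := lt_of_lt_of_le hHmin hHmaxmin
  refine ⟨2*β*Hmax*Hmax*Nβ/(Hmin*m), ?_⟩
  intro d hd f hfSO s s' hgrp hfs
  have hc_eq : (2*β*Hmax*Hmax*Nβ/(Hmin*m)) * (Hmin * m) = 2*β*Hmax*Hmax*Nβ :=
    div_mul_cancel₀ _ (by positivity)
  have hcpos : (0:ℝ) ≤ 2*β*Hmax*Hmax*Nβ/(Hmin*m) := by positivity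
  obtain ⟨D, hDdef⟩ : ∃ v : ℝ, v = Finset.univ.inf' Finset.univ_nonempty d := ⟨_, rfl⟩
  have hD : 0 < D := by
    rw [hDdef]; exact (Finset.lt_inf'_iff _).mpr fun k _ => hd k
  have hx : ∀ a, 0 ≤ ncgLoad r f a :=
    fun a => Finset.sum_nonneg fun u _ => mul_nonneg (hr a u) (hfSO.1.1 u)
  -- price decomposition
  have hprice : ∀ u, ncgPrice r τ f u
      = (∑ a, r a u * (γ a * (ncgLoad r f a) ^ β)) + ∑ a, r a u * η a := by
    intro u
    unfold ncgPrice
    rw [← Finset.sum_add_distrib]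
    exact Finset.sum_congr rfl fun a _ => by rw [hτ]; ring
  have hmarg : ∀ u, (∑ a, r a u * ((1+β) * γ a * (ncgLoad r f a) ^ β + η a))
      = (1+β) * (∑ a, r a u * (γ a * (ncgLoad r f a) ^ β)) + ∑ a, r a u * η a := by
    intro u
    rw [Finset.mul_sum, ← Finset.sum_add_distrib]
    exact Finset.sum_congr rfl fun a _ => by ring
  have hGnn : ∀ u, 0 ≤ ∑ a, r a u * (γ a * (ncgLoad r f a) ^ β) := fun u =>
    Finset.sum_nonneg fun a _ =>
      mul_nonneg (hr a u) (mul_nonneg (hγ a).le (Real.rpow_nonneg (hx a) β))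
  -- kkt for s vs s'
  have kkt1 := ncg_kkt r hr grp γ η hγ hη β hβ τ hτ d f hfSO s s' hgrp hfs
  rw [hmarg s, hmarg s'] at kkt1
  -- heavily used strategy s0
  obtain ⟨s0, hs0T, hs0⟩ : ∃ s0 ∈ univ.filter (fun u => grp u = grp s),
      d (grp s) / (univ.filter (fun u => grp u = grp s)).card ≤ f s0 := by
    have hTsum : ∑ u ∈ univ.filter (fun u => grp u = grp s), f u = d (grp s) := hfSO.1.2 _
    have hTne : (univ.filter (fun u => grp u = grp s)).Nonempty :=
      ⟨s, Finset.mem_filter.mpr ⟨Finset.mem_univ s, rfl⟩⟩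
    have hTcard : (0:ℝ) < (univ.filter (fun u => grp u = grp s)).card := by
      exact_mod_cast Finset.card_pos.mpr hTne
    apply Finset.exists_le_of_sum_le hTne
    rw [Finset.sum_const, hTsum, nsmul_eq_mul, mul_div_cancel₀ _ (ne_of_gt hTcard)]
  have hTcard : (0:ℝ) < (univ.filter (fun u => grp u = grp s)).card := by
    exact_mod_cast Finset.card_pos.mpr ⟨s0, hs0T⟩
  have hs0grp : grp s0 = grp s' := by
    rw [(Finset.mem_filter.mp hs0T).2, hgrp]
  have hfs0 : 0 < f s0 := lt_of_lt_of_le (div_pos (hd _) hTcard) hs0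
  have kkt0 := ncg_kkt r hr grp γ η hγ hη β hβ τ hτ d f hfSO s0 s' hs0grp hfs0
  rw [hmarg s0, hmarg s'] at kkt0
  -- lower bound on G s0 : m * D^β ≤ G s0 * Nβ
  have hfs0D : D / (Fintype.card S : ℝ) ≤ f s0 := by
    have h1 : D ≤ d (grp s) := by rw [hDdef]; exact Finset.inf'_le _ (Finset.mem_univ _)
    have h2 : ((univ.filter (fun u => grp u = grp s)).card : ℝ) ≤ (Fintype.card S : ℝ) := by
      exact_mod_cast Finset.card_le_card (Finset.subset_univ _)
    calc D / (Fintype.card S : ℝ) ≤ d (grp s) / (Fintype.card S : ℝ) := by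
          apply div_le_div_of_nonneg_right h1 hN.le
      _ ≤ d (grp s) / (univ.filter (fun u => grp u = grp s)).card :=
          div_le_div_of_nonneg_left (hd _).le hTcard h2
      _ ≤ f s0 := hs0
  have hGs0 : m * D ^ β ≤ (∑ a, r a s0 * (γ a * (ncgLoad r f a) ^ β)) * Nβ := by
    have hstep : ∀ a, γ a * (r a s0) ^ (1+β) * (f s0) ^ β ≤ r a s0 * (γ a * (ncgLoad r f a) ^ β) := by
      intro a
      have hxa : r a s0 * f s0 ≤ ncgLoad r f a :=
        Finset.single_le_sum (f := fun u => r a u * f u)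
          (fun u _ => mul_nonneg (hr a u) (hfSO.1.1 u)) (Finset.mem_univ s0)
      have h1 : (r a s0 * f s0) ^ β ≤ (ncgLoad r f a) ^ β :=
        Real.rpow_le_rpow (mul_nonneg (hr a s0) hfs0.le) hxa hβ.le
      rw [Real.mul_rpow (hr a s0) hfs0.le] at h1
      have h3 : (r a s0) ^ (1+β) = r a s0 * (r a s0) ^ β := by
        rw [Real.rpow_add' (hr a s0) (by positivity), Real.rpow_one]
      rw [h3]
      calc γ a * (r a s0 * (r a s0) ^ β) * (f s0) ^ β
          = (γ a * r a s0) * ((r a s0) ^ β * (f s0) ^ β) := by ring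
        _ ≤ (γ a * r a s0) * (ncgLoad r f a) ^ β :=
            mul_le_mul_of_nonneg_left h1 (mul_nonneg (hγ a).le (hr a s0))
        _ = r a s0 * (γ a * (ncgLoad r f a) ^ β) := by ring
    have hsum : (∑ a, γ a * (r a s0) ^ (1+β)) * (f s0) ^ β
        ≤ ∑ a, r a s0 * (γ a * (ncgLoad r f a) ^ β) := by
      rw [Finset.sum_mul]
      exact Finset.sum_le_sum fun a _ => hstep a
    have h6 : D ^ β / Nβ ≤ (f s0) ^ β := by
      rw [hNβdef, ← Real.div_rpow hD.le hN.le]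
      exact Real.rpow_le_rpow (by positivity) hfs0D hβ.le
    have h7 : m * (D ^ β / Nβ) ≤ (∑ a, γ a * (r a s0) ^ (1+β)) * (f s0) ^ β := by
      have := mul_le_mul (hmm s0) h6 (by positivity) (le_trans hm.le (hmm s0))
      linarith
    have h8 : m * (D ^ β / Nβ) * Nβ = m * D ^ β := by field_simp
    have h9 := mul_le_mul_of_nonneg_right (le_trans h7 hsum) hNβ.le
    rw [h8] at h9
    exact h9
  -- assemble
  rw [hprice s, hprice s', ← hDdef, Real.rpow_neg hD.le]
  exact ncg_algebra hβ hHmin hm hNβ (Real.rpow_pos_of_pos hD β) hHmaxmin hcpos hc_eq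
    kkt1 kkt0 hGs0 (hGnn s') (hHb s).2 (hHb s').1 (hHb s').2 (hHb s0).1
end

section
/- In a routing game where some arc b lies on every feasible path and dominates all other arcs (τ_a(t·ζ_a)/τ_b(t·ζ_b) → 0 as t → ∞ for all other arcs a and all feasible load-rate vectors with ζ_b = 1), the scaled latencies with scaling g_n = τ_b(T_n) converge to the constant limits l_b ≡ 1 and l_a ≡ 0 (a ≠ b); hence the limit game has constant latencies and its Nash equilibria are social optima. -/
open Finset Filter

variable {A S K : Type*}

theorem stmt_17 [Fintype A] [Fintype S] [Fintype K] [DecidableEq A] [DecidableEq K]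
    (r : A → S → ℝ) (hr01 : ∀ a s, r a s = 0 ∨ r a s = 1) (grp : S → K)
    (b : A) (hb : ∀ s, r b s = 1)
    (τ : A → ℝ → ℝ) (hτpos : ∀ a x, 0 < x → 0 < τ a x)
    (hτmono : ∀ a, MonotoneOn (τ a) (Set.Ici 0))
    (hdom : ∀ a, a ≠ b → ∀ ζ : ℝ, 0 ≤ ζ → ζ ≤ 1 →
      Tendsto (fun t : ℝ => τ a (t * ζ) / τ b t) atTop (nhds 0))
    (T : ℕ → ℝ) (hT : Tendsto T atTop atTop) :
    (∀ a, a ≠ b → ∀ ζ : ℝ, 0 ≤ ζ → ζ ≤ 1 →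
      Tendsto (fun n => τ a (T n * ζ) / τ b (T n)) atTop (nhds 0)) ∧
    (Tendsto (fun n => τ b (T n * 1) / τ b (T n)) atTop (nhds 1)) ∧
    (∀ d : K → ℝ, ∀ f : S → ℝ,
      NCGIsNE r (fun a _ => if a = b then (1:ℝ) else 0) grp d f →
      NCGIsSO r (fun a _ => if a = b then (1:ℝ) else 0) grp d f) := by
  refine ⟨fun a ha ζ h0 h1 => (hdom a ha ζ h0 h1).comp hT, ?_, ?_⟩
  · have h : ∀ᶠ n in atTop, τ b (T n * 1) / τ b (T n) = 1 := by
      filter_upwards [hT.eventually_gt_atTop 0] with n hn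
      rw [mul_one, div_self (ne_of_gt (hτpos b _ hn))]
    exact Tendsto.congr' (h.mono fun n hn => hn.symm) tendsto_const_nhds
  · intro d f hNE
    have key : ∀ g : S → ℝ, NCGFeasible grp d g →
        ncgCost r (fun a _ => if a = b then (1:ℝ) else 0) g = ∑ k, d k := by
      intro g hg
      have : ncgCost r (fun a _ => if a = b then (1:ℝ) else 0) g
          = ncgLoad r g b := by
        unfold ncgCost
        rw [Finset.sum_eq_single b]
        · simp
        · intro a _ ha; simp [ha]
        · simp
      rw [this]
      unfold ncgLoad
      simp only [hb, one_mul]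
      rw [← Finset.sum_fiberwise univ grp g]
      exact Finset.sum_congr rfl fun k _ => hg.2 k
    exact ⟨hNE.1, fun g hg => by rw [key f hNE.1, key g hg]⟩
end
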